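/- arXiv:2602.09811 — 3 statements merged into one kernel-verified Lean document; each statement's English description precedes it below -/
import Mathlib

section
/- Let G be a 3-regular quasi-4-connected graph that has no tetra-cut. Then G is 2-quasi-5-connected. -/
open SimpleGraph Set

namespace VTpaper

/-- Automorphism group acts transitively on vertices. -/
def VertexTransitive {V : Type*} (G : SimpleGraph V) : Prop :=
  ∀ u v : V, ∃ φ : G ≃g G, φ u = v

/-- Automorphism group acts transitively on ordered pairs of adjacent vertices. -/
def ArcTransitive {V : Type*} (G : SimpleGraph V) : Prop :=
  ∀ u₁ v₁ u₂ v₂ : V, G.Adj u₁ v₁ → G.Adj u₂ v₂ →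
    ∃ φ : G ≃g G, φ u₁ = u₂ ∧ φ v₁ = v₂

/-- Automorphism group acts transitively on edges. -/
def EdgeTransitive {V : Type*} (G : SimpleGraph V) : Prop :=
  ∀ e f : Sym2 V, e ∈ G.edgeSet → f ∈ G.edgeSet →
    ∃ φ : G ≃g G, e.map φ = f

/-- `G` is `d`-regular. -/
def Regular {V : Type*} (G : SimpleGraph V) (d : ℕ) : Prop :=
  ∀ v : V, (G.neighborSet v).ncard = d

/-- `G` is `k`-connected: more than `k` vertices, and deleting fewer than `k`
vertices leaves a connected graph. -/
def KConnected {V : Type*} (k : ℕ) (G : SimpleGraph V) : Prop :=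
  k < Nat.card V ∧ ∀ S : Set V, S.Finite → S.ncard < k → (G.induce Sᶜ).Connected

/-- A (vertex) separation of order `k`. -/
def IsSep {V : Type*} (G : SimpleGraph V) (k : ℕ) (A B : Set V) : Prop :=
  A ∪ B = Set.univ ∧ (A \ B).Nonempty ∧ (B \ A).Nonempty ∧
    (∀ a ∈ A \ B, ∀ b ∈ B \ A, ¬ G.Adj a b) ∧ (A ∩ B).ncard = k

/-- A side induces a claw `K_{1,3}`. -/
def InducesClaw {V : Type*} (G : SimpleGraph V) (A : Set V) : Prop :=
  Nonempty (G.induce A ≃g completeBipartiteGraph (Fin 1) (Fin 3))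

/-- Internally 4-connected: 3-connected and every 3-separation has a side inducing a claw. -/
def InternallyFourConnected {V : Type*} (G : SimpleGraph V) : Prop :=
  KConnected 3 G ∧ ∀ A B : Set V, IsSep G 3 A B → InducesClaw G A ∨ InducesClaw G B

/-- Quasi-4-connected: 3-connected and every 3-separation has a side with one interior vertex. -/
def QuasiFourConnected {V : Type*} (G : SimpleGraph V) : Prop :=
  KConnected 3 G ∧ ∀ A B : Set V, IsSep G 3 A B → (A \ B).ncard = 1 ∨ (B \ A).ncard = 1

/-- 2-quasi-5-connected. -/
def TwoQuasiFiveConnected {V : Type*} (G : SimpleGraph V) : Prop :=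
  QuasiFourConnected G ∧
    ∀ A B : Set V, IsSep G 4 A B → (A \ B).ncard ≤ 2 ∨ (B \ A).ncard ≤ 2

/-- The set of edges of `G` crossing from `A` to `B`. -/
def cutEdges {V : Type*} (G : SimpleGraph V) (A B : Set V) : Set (Sym2 V) :=
  {e | ∃ a b, a ∈ A ∧ b ∈ B ∧ G.Adj a b ∧ e = s(a, b)}

/-- An edge-cut: a bipartition of the vertex set with both sides nonempty. -/
def IsEdgeCut {V : Type*} (G : SimpleGraph V) (A B : Set V) : Prop :=
  A ∪ B = Set.univ ∧ Disjoint A B ∧ A.Nonempty ∧ B.Nonempty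

/-- A set of edges forms a matching (pairwise vertex-disjoint). -/
def IsMatchingSet {V : Type*} (S : Set (Sym2 V)) : Prop :=
  S.Pairwise fun e f => ∀ v : V, ¬ (v ∈ e ∧ v ∈ f)

/-- A tetra-cut: a 4-edge-cut whose cut edges form a matching. -/
def IsTetraCut {V : Type*} (G : SimpleGraph V) (A B : Set V) : Prop :=
  IsEdgeCut G A B ∧ (cutEdges G A B).ncard = 4 ∧ IsMatchingSet (cutEdges G A B)

/-- Two edge-cuts are nested: a side of one is contained in a side of the other. -/
def NestedCut {V : Type*} (A B C D : Set V) : Prop :=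
  A ⊆ C ∨ A ⊆ D ∨ B ⊆ C ∨ B ⊆ D

/-- `G` (on `V'`) is a `K_r`-expansion of `H` (on `V`) along the projection `f`. -/
def IsKrExpansionAlong {V V' : Type*} (H : SimpleGraph V) (G : SimpleGraph V')
    (r : ℕ) (f : V' → V) : Prop :=
  Function.Surjective f ∧
  (∀ v : V, (f ⁻¹' {v}).ncard = r) ∧
  (∀ x y : V', x ≠ y → f x = f y → G.Adj x y) ∧
  (∀ x y : V', G.Adj x y → f x ≠ f y → H.Adj (f x) (f y)) ∧
  (∀ x : V', ∃! y : V', G.Adj x y ∧ f x ≠ f y) ∧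
  (∀ u v : V, H.Adj u v → ∃! p : V' × V', f p.1 = u ∧ f p.2 = v ∧ G.Adj p.1 p.2)

def IsKrExpansion {V V' : Type*} (H : SimpleGraph V) (G : SimpleGraph V') (r : ℕ) : Prop :=
  ∃ f : V' → V, IsKrExpansionAlong H G r f

/-- `G` is a clique-expansion of `H` along `f`: the fibre over `v` is a clique of
size `deg v`, and the cross edges form a perfect matching, one per edge of `H`. -/
def IsCliqueExpansionAlong {V V' : Type*} (H : SimpleGraph V) (G : SimpleGraph V')
    (f : V' → V) : Prop :=
  (∀ v : V, (f ⁻¹' {v}).ncard = (H.neighborSet v).ncard) ∧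
  (∀ x y : V', x ≠ y → f x = f y → G.Adj x y) ∧
  (∀ x y : V', G.Adj x y → f x ≠ f y → H.Adj (f x) (f y)) ∧
  (∀ x : V', ∃! y : V', G.Adj x y ∧ f x ≠ f y) ∧
  (∀ u v : V, H.Adj u v → ∃! p : V' × V', f p.1 = u ∧ f p.2 = v ∧ G.Adj p.1 p.2)

/-- `G` is a `C_k`-expansion of `H` along `f`: each fibre induces a `k`-cycle,
and the cross edges form a perfect matching, one per edge of `H`. -/
def IsCycleExpansionAlong {V V' : Type*} (H : SimpleGraph V) (G : SimpleGraph V')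
    (k : ℕ) (f : V' → V) : Prop :=
  Function.Surjective f ∧
  (∀ v : V, Nonempty ((G.induce (f ⁻¹' {v})) ≃g SimpleGraph.cycleGraph k)) ∧
  (∀ x y : V', G.Adj x y → f x ≠ f y → H.Adj (f x) (f y)) ∧
  (∀ x : V', ∃! y : V', G.Adj x y ∧ f x ≠ f y) ∧
  (∀ u v : V, H.Adj u v → ∃! p : V' × V', f p.1 = u ∧ f p.2 = v ∧ G.Adj p.1 p.2)

/-- The line graph of `G`, on the vertex set `G.edgeSet`. -/
def LineGraph {V : Type*} (G : SimpleGraph V) : SimpleGraph G.edgeSet where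
  Adj e f := e ≠ f ∧ ∃ v : V, v ∈ e.1 ∧ v ∈ f.1
  symm := by
    constructor
    rintro e f ⟨hne, v, hv1, hv2⟩
    exact ⟨hne.symm, v, hv2, hv1⟩
  loopless := ⟨fun e h => h.1 rfl⟩

/-- The set of edges of `G` incident with `v`, as vertices of the line graph. -/
def incEdges {V : Type*} (G : SimpleGraph V) (v : V) : Set G.edgeSet :=
  {e | v ∈ e.1}

/-- A triangle in a graph, as a set of vertices. -/
def IsTriangle {α : Type*} (L : SimpleGraph α) (T : Set α) : Prop :=
  T.ncard = 3 ∧ L.IsClique T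

/-- The quotient of `G` by a partition `P` of its vertex set. -/
def quotGraph {V : Type*} (G : SimpleGraph V) (P : Set (Set V)) : SimpleGraph P where
  Adj s t := s ≠ t ∧ ∃ x ∈ (s : Set V), ∃ y ∈ (t : Set V), G.Adj x y
  symm := by
    constructor
    rintro s t ⟨h, x, hx, y, hy, hxy⟩
    exact ⟨h.symm, y, hy, x, hx, hxy.symm⟩
  loopless := ⟨fun s h => h.1 rfl⟩

/-- The separator edges of a mixed-separation `(A,B)`: edges between `A∖B` and `B∖A`. -/
def sepEdges {V : Type*} (G : SimpleGraph V) (A B : Set V) : Set (Sym2 V) :=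
  {e | ∃ a b, a ∈ A \ B ∧ b ∈ B \ A ∧ G.Adj a b ∧ e = s(a, b)}

/-- A mixed-separation. -/
def IsMixedSep {V : Type*} (G : SimpleGraph V) (A B : Set V) : Prop :=
  A ∪ B = Set.univ ∧ (A \ B).Nonempty ∧ (B \ A).Nonempty

/-- Order of a mixed-separation: separator vertices plus separator edges. -/
noncomputable def mixedOrder {V : Type*} (G : SimpleGraph V) (A B : Set V) : ℕ :=
  (A ∩ B).ncard + (sepEdges G A B).ncard

/-- Matching-condition: the separator edges form a matching and avoid separator vertices. -/
def MatchingCond {V : Type*} (G : SimpleGraph V) (A B : Set V) : Prop :=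
  IsMatchingSet (sepEdges G A B) ∧ ∀ e ∈ sepEdges G A B, ∀ v ∈ A ∩ B, v ∉ e

/-- Degree-condition: every separator vertex has at least two neighbours in each open side. -/
def DegreeCond {V : Type*} (G : SimpleGraph V) (A B : Set V) : Prop :=
  ∀ v ∈ A ∩ B, 2 ≤ (G.neighborSet v ∩ (A \ B)).ncard ∧
    2 ≤ (G.neighborSet v ∩ (B \ A)).ncard

/-- A tetra-separation: a mixed-4-separation satisfying the matching- and degree-conditions. -/
def IsTetraSep {V : Type*} (G : SimpleGraph V) (A B : Set V) : Prop :=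
  IsMixedSep G A B ∧ mixedOrder G A B = 4 ∧ MatchingCond G A B ∧ DegreeCond G A B

/-- Two mixed-separations are nested. -/
def NestedSep {V : Type*} (A B C D : Set V) : Prop :=
  (A ⊆ C ∧ D ⊆ B) ∨ (A ⊆ D ∧ C ⊆ B) ∨ (C ⊆ A ∧ B ⊆ D) ∨ (D ⊆ A ∧ B ⊆ C)

/-- A totally-nested tetra-separation. -/
def TotallyNestedTetraSep {V : Type*} (G : SimpleGraph V) (A B : Set V) : Prop :=
  IsTetraSep G A B ∧ ∀ C D : Set V, IsTetraSep G C D → NestedSep A B C D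

/-- A side induces a `K₄`. -/
def InducesK4 {V : Type*} (G : SimpleGraph V) (A : Set V) : Prop :=
  A.ncard = 4 ∧ G.IsClique A

/-- Essentially 5-connected. -/
def EssentiallyFiveConnected {V : Type*} (G : SimpleGraph V) : Prop :=
  KConnected 4 G ∧ ∀ A B : Set V, IsTetraSep G A B →
    A ∩ B = ∅ ∧ (InducesK4 G A ∨ InducesK4 G B)

/-- Quasi-5-connected: 4-connected with no tetra-separation. -/
def QuasiFiveConnected {V : Type*} (G : SimpleGraph V) : Prop :=
  KConnected 4 G ∧ ∀ A B : Set V, ¬ IsTetraSep G A B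

/-- The square of a cycle, `C_ℓ²`, on `ZMod ℓ`. -/
def cycleSq (ℓ : ℕ) : SimpleGraph (ZMod ℓ) where
  Adj i j := i ≠ j ∧ (j = i + 1 ∨ i = j + 1 ∨ j = i + 2 ∨ i = j + 2)
  symm := by
    constructor
    rintro i j ⟨h, h2⟩
    exact ⟨h.symm, by tauto⟩
  loopless := ⟨fun i h => h.1 rfl⟩

/-- A cycle-decomposition of `G` witnessing that it is a cycle of triangle-bags of length `ℓ`. -/
def IsCycleOfTriangleBags {V : Type*} (G : SimpleGraph V) (ℓ : ℕ) : Prop :=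
  ∃ B : ZMod ℓ → Set V,
    (⋃ i, B i) = Set.univ ∧
    (∀ i, (B i).ncard = 3 ∧ G.IsClique (B i)) ∧
    (∀ x y : V, G.Adj x y → ∃ i, x ∈ B i ∧ y ∈ B i) ∧
    (∀ i, (B i ∩ B (i + 1)).ncard = 2) ∧
    (∀ i j, i ≠ j → i ≠ j + 1 → j ≠ i + 1 →
      (B i ∩ B (i + 1)) ∩ (B j ∩ B (j + 1)) = ∅) ∧
    (∀ v i j, v ∈ B i → v ∈ B j → i ≠ j → v ∈ B (i + 1) ∨ v ∈ B (j + 1))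

/-- The 3-dimensional hypercube graph `Q₃`. -/
def cubeGraph : SimpleGraph (Fin 3 → Bool) where
  Adj x y := ∃! i, x i ≠ y i
  symm := by
    constructor
    rintro x y ⟨i, hi, hu⟩
    exact ⟨i, hi.symm, fun j hj => hu j hj.symm⟩
  loopless := by
    constructor
    rintro x ⟨i, hi, -⟩
    exact hi rfl

/-- The graph on arcs of `G` from Observation: vertices are ordered adjacent pairs. -/
def arcGraph {V : Type*} (G : SimpleGraph V) : SimpleGraph {p : V × V // G.Adj p.1 p.2} where
  Adj x y := x ≠ y ∧ ((x.1.1 = y.1.2 ∧ x.1.2 = y.1.1) ∨ x.1.1 = y.1.1)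
  symm := by
    constructor
    rintro x y ⟨h, h2 | h3⟩
    · exact ⟨h.symm, Or.inl ⟨h2.2.symm, h2.1.symm⟩⟩
    · exact ⟨h.symm, Or.inr h3.symm⟩
  loopless := ⟨fun x h => h.1 rfl⟩

end VTpaper


open VTpaper in
lemma sep3_contra {V : Type*} [Fintype V] {G : SimpleGraph V}
    (hq4 : ∀ A B : Set V, IsSep G 3 A B → (A \ B).ncard = 1 ∨ (B \ A).ncard = 1)
    (C T : Set V) (hdisj : ∀ v, v ∈ C → v ∈ T → False) (hT : T.ncard = 3)
    (hC : 2 ≤ C.ncard) (hD : 2 ≤ ((C ∪ T)ᶜ).ncard)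
    (hnb : ∀ c ∈ C, ∀ v, G.Adj c v → v ∈ C ∪ T) : False := by
  have h1 : (C ∪ T) \ Cᶜ = C := by
    ext v
    simp only [Set.mem_diff, Set.mem_union, Set.mem_compl_iff, not_not]
    tauto
  have h2 : Cᶜ \ (C ∪ T) = (C ∪ T)ᶜ := by
    ext v
    simp only [Set.mem_diff, Set.mem_union, Set.mem_compl_iff]
    tauto
  have h3 : (C ∪ T) ∩ Cᶜ = T := by
    ext v
    simp only [Set.mem_inter_iff, Set.mem_union, Set.mem_compl_iff]
    have := hdisj v
    tauto
  have hsep : IsSep G 3 (C ∪ T) Cᶜ := by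
    refine ⟨?_, ?_, ?_, ?_, ?_⟩
    · ext v
      simp only [Set.mem_union, Set.mem_compl_iff, Set.mem_univ, iff_true]
      tauto
    · rw [h1]
      exact Set.nonempty_of_ncard_ne_zero (by omega)
    · rw [h2]
      exact Set.nonempty_of_ncard_ne_zero (by omega)
    · intro a ha b hb hadj
      rw [h1] at ha
      rw [h2] at hb
      exact hb (hnb a ha b hadj)
    · rw [h3]; exact hT
  rcases hq4 _ _ hsep with h | h
  · rw [h1] at h; omega
  · rw [h2] at h; omega

open VTpaper in
/-- If `s` in the separator has no neighbour in `X`, contradiction with quasi-4. -/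
lemma nbr_half {V : Type*} [Fintype V] {G : SimpleGraph V}
    (hq4 : ∀ A B : Set V, IsSep G 3 A B → (A \ B).ncard = 1 ∨ (B \ A).ncard = 1)
    (X Y S : Set V)
    (htri : ∀ v, v ∈ X ∨ v ∈ Y ∨ v ∈ S)
    (hXY : ∀ v, v ∈ X → v ∈ Y → False)
    (hXS : ∀ v, v ∈ X → v ∈ S → False)
    (hYS : ∀ v, v ∈ Y → v ∈ S → False)
    (hnadj : ∀ a ∈ X, ∀ b ∈ Y, ¬ G.Adj a b)
    (hS4 : S.ncard = 4) (hX3 : 2 < X.ncard) (hY3 : 2 < Y.ncard)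
    {s : V} (hs : s ∈ S) (hno : ∀ x ∈ X, ¬ G.Adj s x) : False := by
  refine sep3_contra hq4 (Y ∪ {s}) (S \ {s}) ?_ ?_ ?_ ?_ ?_
  · rintro v (hv | hv) ⟨hvS, hvs⟩
    · exact hYS v hv hvS
    · exact hvs hv
  · rw [Set.ncard_diff_singleton_of_mem hs, hS4]
  · have := Set.ncard_le_ncard (Set.subset_union_left (s := Y) (t := {s})) (Set.toFinite _)
    omega
  · have hEq : ((Y ∪ {s}) ∪ (S \ {s}))ᶜ = X := by
      ext v
      simp only [Set.mem_compl_iff, Set.mem_union, Set.mem_diff, Set.mem_singleton_iff]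
      have h1 := htri v
      have h2 := hXY v
      have h3 := hXS v
      have h4 := hYS v
      have h5 : v = s → v ∈ S := fun h => h ▸ hs
      tauto
    rw [hEq]; omega
  · rintro c hc v hadj
    rcases htri v with hvX | hvY | hvS
    · exfalso
      rcases hc with hcY | hcs
      · exact hnadj v hvX c hcY hadj.symm
      · have : c = s := hcs
        exact hno v hvX (this ▸ hadj)
    · exact Or.inl (Or.inl hvY)
    · by_cases hv : v = s
      · exact Or.inl (Or.inr hv)
      · exact Or.inr ⟨hvS, hv⟩

open VTpaper in
/-- Two separator vertices with the same unique cross-neighbour `w ∈ Y` give a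
forbidden 3-separation. -/
lemma tetra_half {V : Type*} [Fintype V] {G : SimpleGraph V}
    (hq4 : ∀ A B : Set V, IsSep G 3 A B → (A \ B).ncard = 1 ∨ (B \ A).ncard = 1)
    (X Y S : Set V)
    (htri : ∀ v, v ∈ X ∨ v ∈ Y ∨ v ∈ S)
    (hXY : ∀ v, v ∈ X → v ∈ Y → False)
    (hXS : ∀ v, v ∈ X → v ∈ S → False)
    (hYS : ∀ v, v ∈ Y → v ∈ S → False)
    (hnadj : ∀ a ∈ X, ∀ b ∈ Y, ¬ G.Adj a b)
    (hS4 : S.ncard = 4) (hX3 : 2 < X.ncard) (hY3 : 2 < Y.ncard)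
    {s t w : V} (hs : s ∈ S) (ht : t ∈ S) (hst : s ≠ t) (hwY : w ∈ Y)
    (hNs : G.neighborSet s ∩ Y = {w}) (hNt : G.neighborSet t ∩ Y = {w}) : False := by
  have hsplit2 : (S \ {s, t}).ncard = 2 := by
    have he : S \ {s, t} = (S \ {s}) \ {t} := by
      ext v
      simp only [Set.mem_diff, Set.mem_insert_iff, Set.mem_singleton_iff]
      tauto
    have ht' : t ∈ S \ {s} := ⟨ht, fun h => hst (Set.mem_singleton_iff.mp h).symm⟩
    rw [he, Set.ncard_diff_singleton_of_mem ht', Set.ncard_diff_singleton_of_mem hs, hS4]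
  have hwnm : w ∉ S \ {s, t} := fun h => hYS w hwY h.1
  refine sep3_contra hq4 (X ∪ {s, t}) (insert w (S \ {s, t})) ?_ ?_ ?_ ?_ ?_
  · intro v hv hvT
    rcases Set.mem_insert_iff.mp hvT with hvw | hvT'
    · rcases hv with h | h
      · exact hXY v h (hvw ▸ hwY)
      · exact hYS v (hvw ▸ hwY) ((Set.mem_insert_iff.mp h).elim (fun h' => h' ▸ hs)
          (fun h' => (Set.mem_singleton_iff.mp h') ▸ ht))
    · rcases hv with h | h
      · exact hXS v h hvT'.1
      · exact hvT'.2 h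
  · rw [Set.ncard_insert_of_notMem hwnm, hsplit2]
  · have := Set.ncard_le_ncard (Set.subset_union_left (s := X) (t := {s, t})) (Set.toFinite _)
    omega
  · have hEq : ((X ∪ {s, t}) ∪ insert w (S \ {s, t}))ᶜ = Y \ {w} := by
      ext v
      constructor
      · intro hv
        have hvX : v ∉ X := fun h => hv (Set.mem_union_left _ (Set.mem_union_left _ h))
        have hvw : v ≠ w := fun h =>
          hv (Set.mem_union_right _ (Set.mem_insert_iff.mpr (Or.inl h)))
        refine ⟨?_, hvw⟩
        rcases htri v with h | h | h
        · exact absurd h hvX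
        · exact h
        · by_cases hvs : v = s
          · exact absurd (Set.mem_union_left _
              (Set.mem_union_right _ (Set.mem_insert_iff.mpr (Or.inl hvs)))) hv
          · by_cases hvt : v = t
            · exact absurd (Set.mem_union_left _
                (Set.mem_union_right _ (Set.mem_insert_iff.mpr (Or.inr (Set.mem_singleton_iff.mpr hvt))))) hv
            · have hmem : v ∈ S \ ({s, t} : Set V) :=
                ⟨h, fun hc => (Set.mem_insert_iff.mp hc).elim hvs
                  (fun h' => hvt (Set.mem_singleton_iff.mp h'))⟩
              exact absurd (Set.mem_union_right _
                (Set.mem_insert_iff.mpr (Or.inr hmem))) hv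
      · rintro ⟨hvY, hvw⟩ hmem
        rcases hmem with (h | h) | h
        · exact hXY v h hvY
        · rcases Set.mem_insert_iff.mp h with h' | h'
          · exact hYS v hvY (h' ▸ hs)
          · exact hYS v hvY ((Set.mem_singleton_iff.mp h') ▸ ht)
        · rcases Set.mem_insert_iff.mp h with h' | h'
          · exact hvw h'
          · exact hYS v hvY h'.1
    rw [hEq, Set.ncard_diff_singleton_of_mem hwY]
    omega
  · rintro c hc u hadj
    rcases htri u with huX | huY | huS
    · exact Or.inl (Or.inl huX)
    · -- u ∈ Y: c ∈ X impossible; c = s or t forces u = w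
      rcases hc with hcX | hcst
      · exact absurd hadj (hnadj c hcX u huY)
      · have hu : u = w := by
          rcases hcst with rfl | rfl
          · have : u ∈ G.neighborSet c ∩ Y := ⟨hadj, huY⟩
            rwa [hNs, Set.mem_singleton_iff] at this
          · have : u ∈ G.neighborSet c ∩ Y := ⟨hadj, huY⟩
            rwa [hNt, Set.mem_singleton_iff] at this
        exact Or.inr (Or.inl hu)
    · by_cases hust : u = s ∨ u = t
      · exact Or.inl (Or.inr hust)
      · exact Or.inr (Or.inr ⟨huS, hust⟩)


open VTpaper in
/-- A 3-regular quasi-4-connected graph with no tetra-cut is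
2-quasi-5-connected. -/
theorem stmt_12 {V : Type*} [Fintype V] (G : SimpleGraph V)
    (hreg : Regular G 3) (hq4 : QuasiFourConnected G)
    (hnt : ∀ A B : Set V, ¬ IsTetraCut G A B) :
    TwoQuasiFiveConnected G := by
  classical
  obtain ⟨hconn, hq4sep⟩ := hq4
  refine ⟨⟨hconn, hq4sep⟩, ?_⟩
  intro A B hsep
  by_contra hcon
  push_neg at hcon
  obtain ⟨hX3, hY3⟩ := hcon
  obtain ⟨hunion, hAne, hBne, hnadj, hS4⟩ := hsep
  set X := A \ B with hXdef
  set Y := B \ A with hYdef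
  set S := A ∩ B with hSdef
  have htri : ∀ v : V, v ∈ X ∨ v ∈ Y ∨ v ∈ S := by
    intro v
    have hv : v ∈ A ∪ B := hunion ▸ Set.mem_univ v
    rcases hv with h | h
    · by_cases hb : v ∈ B
      · exact Or.inr (Or.inr ⟨h, hb⟩)
      · exact Or.inl ⟨h, hb⟩
    · by_cases ha : v ∈ A
      · exact Or.inr (Or.inr ⟨ha, h⟩)
      · exact Or.inr (Or.inl ⟨h, ha⟩)
  have hXY : ∀ v, v ∈ X → v ∈ Y → False := fun v hx hy => hy.2 hx.1
  have hXS : ∀ v, v ∈ X → v ∈ S → False := fun v hx hsv => hx.2 hsv.2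
  have hYS : ∀ v, v ∈ Y → v ∈ S → False := fun v hy hsv => hy.2 hsv.1
  have hnadj' : ∀ a ∈ Y, ∀ b ∈ X, ¬ G.Adj a b :=
    fun a ha b hb hadj => hnadj b hb a ha hadj.symm
  -- each separator vertex has a neighbour on both sides
  have hXnbr : ∀ s ∈ S, ∃ x ∈ X, G.Adj s x := by
    intro s hs
    by_contra hno
    push_neg at hno
    exact nbr_half hq4sep X Y S htri hXY hXS hYS hnadj hS4 hX3 hY3 hs hno
  have hYnbr : ∀ s ∈ S, ∃ y ∈ Y, G.Adj s y := by
    intro s hs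
    by_contra hno
    push_neg at hno
    exact nbr_half hq4sep Y X S (fun v => by have := htri v; tauto)
      (fun v hy hx => hXY v hx hy) hYS hXS hnadj' hS4 hY3 hX3 hs hno
  -- neighbour counts
  have hNsplit : ∀ s : V, (G.neighborSet s ∩ X).ncard + (G.neighborSet s ∩ Y).ncard
      + (G.neighborSet s ∩ S).ncard = 3 := by
    intro s
    have hN : G.neighborSet s =
        (G.neighborSet s ∩ X) ∪ ((G.neighborSet s ∩ Y) ∪ (G.neighborSet s ∩ S)) := by
      ext v
      simp only [Set.mem_union, Set.mem_inter_iff]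
      have := htri v
      tauto
    have d1 : Disjoint (G.neighborSet s ∩ Y) (G.neighborSet s ∩ S) := by
      rw [Set.disjoint_left]
      rintro v ⟨-, hy⟩ ⟨-, hsv⟩
      exact hYS v hy hsv
    have d2 : Disjoint (G.neighborSet s ∩ X) ((G.neighborSet s ∩ Y) ∪ (G.neighborSet s ∩ S)) := by
      rw [Set.disjoint_left]
      rintro v ⟨-, hx⟩ (⟨-, hy⟩ | ⟨-, hsv⟩)
      · exact hXY v hx hy
      · exact hXS v hx hsv
    have h3 := hreg s
    rw [hN, Set.ncard_union_eq d2 (Set.toFinite _) (Set.toFinite _),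
      Set.ncard_union_eq d1 (Set.toFinite _) (Set.toFinite _)] at h3
    omega
  have hXpos : ∀ s ∈ S, 1 ≤ (G.neighborSet s ∩ X).ncard := by
    intro s hs
    obtain ⟨x, hx, hadj⟩ := hXnbr s hs
    have : (G.neighborSet s ∩ X).Nonempty := ⟨x, hadj, hx⟩
    have := Set.ncard_pos (Set.toFinite _) |>.mpr this
    omega
  have hYpos : ∀ s ∈ S, 1 ≤ (G.neighborSet s ∩ Y).ncard := by
    intro s hs
    obtain ⟨y, hy, hadj⟩ := hYnbr s hs
    have : (G.neighborSet s ∩ Y).Nonempty := ⟨y, hadj, hy⟩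
    have := Set.ncard_pos (Set.toFinite _) |>.mpr this
    omega
  set YH : Set V := {s | s ∈ S ∧ 2 ≤ (G.neighborSet s ∩ Y).ncard} with hYHdef
  have hYHS : YH ⊆ S := fun v hv => hv.1
  have hcY1 : ∀ s ∈ S, s ∉ YH → (G.neighborSet s ∩ Y).ncard = 1 := by
    intro s hs hns
    have h2 : ¬ 2 ≤ (G.neighborSet s ∩ Y).ncard := fun h => hns ⟨hs, h⟩
    have := hYpos s hs
    omega
  have hcX1 : ∀ s ∈ YH, (G.neighborSet s ∩ X).ncard = 1 ∧ G.neighborSet s ∩ S = ∅ := by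
    intro s hsYH
    obtain ⟨hs, h2⟩ := hsYH
    have hx1 := hXpos s hs
    have hsplit := hNsplit s
    refine ⟨by omega, ?_⟩
    exact (Set.ncard_eq_zero (Set.toFinite _)).mp (by omega)
  have hkey : ∀ s, s ∈ S → ∃ w, (s ∈ YH → G.neighborSet s ∩ X = {w}) ∧
      (s ∉ YH → G.neighborSet s ∩ Y = {w}) := by
    intro s hs
    by_cases hsY : s ∈ YH
    · obtain ⟨w, hw⟩ := Set.ncard_eq_one.mp (hcX1 s hsY).1
      exact ⟨w, fun _ => hw, fun h => absurd hsY h⟩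
    · obtain ⟨w, hw⟩ := Set.ncard_eq_one.mp (hcY1 s hs hsY)
      exact ⟨w, fun h => absurd h hsY, fun _ => hw⟩
  choose! cross hc1 hc2 using hkey
  have hcrossX : ∀ s, s ∈ S → s ∈ YH → cross s ∈ X ∧ G.Adj s (cross s) := by
    intro s hs h
    have hm : cross s ∈ G.neighborSet s ∩ X := by
      rw [hc1 s hs h]
      rfl
    exact ⟨hm.2, hm.1⟩
  have hcrossY : ∀ s, s ∈ S → s ∉ YH → cross s ∈ Y ∧ G.Adj s (cross s) := by
    intro s hs h
    have hm : cross s ∈ G.neighborSet s ∩ Y := by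
      rw [hc2 s hs h]
      rfl
    exact ⟨hm.2, hm.1⟩
  have hcrossS : ∀ s, s ∈ S → cross s ∉ S := by
    intro s hs h
    by_cases hsY : s ∈ YH
    · exact hXS _ (hcrossX s hs hsY).1 h
    · exact hYS _ (hcrossY s hs hsY).1 h
  set P : Set V := X ∪ (S \ YH) with hPdef
  set Q : Set V := Y ∪ YH with hQdef
  have hnoS12 : ∀ a ∈ S \ YH, ∀ b ∈ YH, ¬ G.Adj a b := by
    intro a ha b hb hadj
    have h := (hcX1 b hb).2
    have hm : a ∈ G.neighborSet b ∩ S := ⟨hadj.symm, ha.1⟩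
    rw [h] at hm
    exact hm
  have hcutEq : cutEdges G P Q = (fun s => s(s, cross s)) '' S := by
    ext e
    constructor
    · rintro ⟨a, b, ha, hb, hadj, rfl⟩
      rcases ha with haX | haS
      · rcases hb with hbY | hbYH
        · exact absurd hadj (hnadj a haX b hbY)
        · have hbS := hYHS hbYH
          have hm : a ∈ G.neighborSet b ∩ X := ⟨hadj.symm, haX⟩
          rw [hc1 b hbS hbYH, Set.mem_singleton_iff] at hm
          refine ⟨b, hbS, ?_⟩
          simp only []
          rw [← hm, Sym2.eq_swap]
      · rcases hb with hbY | hbYH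
        · have hm : b ∈ G.neighborSet a ∩ Y := ⟨hadj, hbY⟩
          rw [hc2 a haS.1 haS.2, Set.mem_singleton_iff] at hm
          exact ⟨a, haS.1, by rw [hm]⟩
        · exact absurd hadj (hnoS12 a haS b hbYH)
    · rintro ⟨s, hs, rfl⟩
      by_cases hsY : s ∈ YH
      · obtain ⟨hwX, hadj⟩ := hcrossX s hs hsY
        exact ⟨cross s, s, Or.inl hwX, Or.inr hsY, hadj.symm, Sym2.eq_swap.symm⟩
      · obtain ⟨hwY, hadj⟩ := hcrossY s hs hsY
        exact ⟨s, cross s, Or.inr ⟨hs, hsY⟩, Or.inl hwY, hadj, rfl⟩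
  have hinj : Set.InjOn (fun s => s(s, cross s)) S := by
    intro a ha b hb h
    simp only [Sym2.eq, Sym2.rel_iff', Prod.mk.injEq, Prod.swap_prod_mk] at h
    rcases h with ⟨h1, -⟩ | ⟨h1, -⟩
    · exact h1
    · exact absurd (h1 ▸ ha) (fun hc => hcrossS b hb hc)
  have hcard : (cutEdges G P Q).ncard = 4 := by
    rw [hcutEq, Set.ncard_image_of_injOn hinj, hS4]
  have hedgecut : IsEdgeCut G P Q := by
    refine ⟨?_, ?_, ?_, ?_⟩
    · ext v
      simp only [Set.mem_union, Set.mem_univ, iff_true, Set.mem_diff]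
      rcases htri v with h | h | h
      · exact Or.inl (Or.inl h)
      · exact Or.inr (Or.inl h)
      · by_cases hv : v ∈ YH
        · exact Or.inr (Or.inr hv)
        · exact Or.inl (Or.inr ⟨h, hv⟩)
    · rw [Set.disjoint_left]
      rintro v (hv | hv) (hw | hw)
      · exact hXY v hv hw
      · exact hXS v hv (hYHS hw)
      · exact hYS v hw hv.1
      · exact hv.2 hw
    · obtain ⟨x, hx⟩ : X.Nonempty := Set.nonempty_of_ncard_ne_zero (by omega)
      exact ⟨x, Or.inl hx⟩
    · obtain ⟨y, hy⟩ : Y.Nonempty := Set.nonempty_of_ncard_ne_zero (by omega)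
      exact ⟨y, Or.inl hy⟩
  have hnm : ¬ IsMatchingSet (cutEdges G P Q) :=
    fun hm => hnt P Q ⟨hedgecut, hcard, hm⟩
  rw [IsMatchingSet, Set.Pairwise] at hnm
  push_neg at hnm
  obtain ⟨e, he, f, hf, hef, v, hve, hvf⟩ := hnm
  rw [hcutEq] at he hf
  obtain ⟨s, hs, rfl⟩ := he
  obtain ⟨t, ht, rfl⟩ := hf
  simp only [] at hef hve hvf
  have hst : s ≠ t := fun h => hef (by rw [h])
  have hcc : cross s = cross t := by
    rcases Sym2.mem_iff.mp hve with rfl | h1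
    · rcases Sym2.mem_iff.mp hvf with h2 | h2
      · exact absurd h2 hst
      · exact absurd (h2 ▸ hs) (fun hc => hcrossS t ht hc)
    · rcases Sym2.mem_iff.mp hvf with h2 | h2
      · rw [h1] at h2
        exact absurd (h2.symm ▸ ht) (fun hc => hcrossS s hs hc)
      · rw [← h1, h2]
  by_cases hsY : s ∈ YH
  · have htY : t ∈ YH := by
      by_contra htY
      exact hXY _ (hcc ▸ (hcrossX s hs hsY).1) (hcrossY t ht htY).1
    have hwX : cross s ∈ X := (hcrossX s hs hsY).1
    refine tetra_half hq4sep Y X S (fun v => by have := htri v; tauto)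
      (fun v hy hx => hXY v hx hy) hYS hXS hnadj' hS4 hY3 hX3 hs ht hst hwX
      (hc1 s hs hsY) ?_
    rw [hc1 t ht htY, ← hcc]
  · have htY : t ∉ YH := by
      intro htY
      exact hXY _ (hcrossX t ht htY).1 (hcc ▸ (hcrossY s hs hsY).1)
    have hwY : cross s ∈ Y := (hcrossY s hs hsY).1
    refine tetra_half hq4sep X Y S htri hXY hXS hYS hnadj hS4 hX3 hY3 hs ht hst hwY
      (hc2 s hs hsY) ?_
    rw [hc2 t ht htY, ← hcc]
end

section
/- Let k ≤ 5 and let G be a C_k-expansion of a k-regular graph H. Then G is not edge-transitive: the edges inside the cycle copies lie on a cycle of length k in G, whereas the matching edges between different cycle copies lie on no cycle of length at most 5 in G. -/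
open SimpleGraph Set

section Stmt13Aux

open SimpleGraph

variable {V V' : Type*} {G : SimpleGraph V'} {f : V' → V}

private lemma sym2_exists {α : Type*} (e : Sym2 α) : ∃ a b, e = s(a, b) :=
  Sym2.ind (fun a b => ⟨a, b, rfl⟩) e

/-- `crossb f e` is `true` iff the edge `e` crosses fibres of `f`. -/
private noncomputable def crossb (f : V' → V) (e : Sym2 V') : Bool :=
  @decide (¬ (Sym2.map f e).IsDiag) (Classical.propDecidable _)

private lemma crossb_pair {x y : V'} :
    crossb f s(x, y) = true ↔ f x ≠ f y := by
  rw [crossb, @decide_eq_true_iff _ (Classical.propDecidable _), Sym2.map_pair_eq,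
    Sym2.mk_isDiag_iff]

private lemma crossb_eq_true {x y : V'} (h : f x ≠ f y) : crossb f s(x, y) = true :=
  crossb_pair.mpr h

private lemma crossb_eq_false {x y : V'} (h : f x = f y) : crossb f s(x, y) = false := by
  rw [← Bool.not_eq_true, crossb_pair]
  simpa using h

/-- the number of cross edges of a walk. -/
private noncomputable def ncross (f : V' → V) {a b : V'} (p : G.Walk a b) : ℕ :=
  (p.edges.filter (crossb f)).length

private lemma ncross_cons_cross {a v b : V'} (h : G.Adj a v) (q : G.Walk v b)
    (hc : f a ≠ f v) : ncross f (Walk.cons h q) = ncross f q + 1 := by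
  simp [ncross, Walk.edges_cons, List.filter_cons, crossb_eq_true hc]

private lemma ncross_cons_fibre {a v b : V'} (h : G.Adj a v) (q : G.Walk v b)
    (hc : f a = f v) : ncross f (Walk.cons h q) = ncross f q := by
  simp [ncross, Walk.edges_cons, List.filter_cons, crossb_eq_false hc]

private lemma ncross_reverse {a b : V'} (p : G.Walk a b) :
    ncross f p.reverse = ncross f p := by
  rw [ncross, ncross, Walk.edges_reverse]
  exact ((p.edges.reverse_perm).filter _).length_eq

private lemma ncross_pos {a b x y : V'} (p : G.Walk a b) (he : s(x, y) ∈ p.edges)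
    (hf : f x ≠ f y) : 1 ≤ ncross f p := by
  rw [ncross]
  exact List.length_pos_iff.mpr
    (List.ne_nil_of_mem (List.mem_filter.mpr ⟨he, crossb_eq_true hf⟩))

section
variable (hu : ∀ x : V', ∃! y : V', G.Adj x y ∧ f x ≠ f y)

include hu

/-- start-condition bound: in a trail whose starting vertex has its unique cross edge
not on the trail, there are at least as many fibre edges as cross edges. -/
private lemma bound : ∀ {a b : V'} (p : G.Walk a b), p.IsTrail →
    2 * ncross f p ≤ p.length + 1 ∧
    ((∀ z : V', G.Adj a z → f a ≠ f z → s(a, z) ∉ p.edges) → 2 * ncross f p ≤ p.length) := by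
  intro a b p
  induction p with
  | nil => intro _; constructor <;> simp [ncross]
  | @cons a v b h q ih =>
    intro ht
    have hq : q.IsTrail := ht.of_cons
    have hnotin : s(a, v) ∉ q.edges := by
      have h2 := ht.edges_nodup
      rw [Walk.edges_cons, List.nodup_cons] at h2
      exact h2.1
    obtain ⟨ihw, ihs⟩ := ih hq
    by_cases hc : f a = f v
    · rw [ncross_cons_fibre h q hc, Walk.length_cons]
      omega
    · rw [ncross_cons_cross h q hc, Walk.length_cons]
      have hvcond : ∀ z : V', G.Adj v z → f v ≠ f z → s(v, z) ∉ q.edges := by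
        intro z hz hfz hmem
        have hza : z = a := (hu v).unique ⟨hz, hfz⟩ ⟨h.symm, fun hh => hc hh.symm⟩
        subst hza
        exact hnotin (by rwa [Sym2.eq_swap] at hmem)
      have hs := ihs hvcond
      constructor
      · omega
      · intro hcond
        exact absurd (by rw [Walk.edges_cons]; exact List.mem_cons_self)
          (hcond v h hc)

private lemma endBound {a b : V'} (p : G.Walk a b) (ht : p.IsTrail)
    (hcond : ∀ z : V', G.Adj b z → f b ≠ f z → s(b, z) ∉ p.edges) :
    2 * ncross f p ≤ p.length := by
  have h := (bound hu p.reverse ht.reverse).2 ?_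
  · rwa [ncross_reverse, Walk.length_reverse] at h
  · intro z hz hfz hmem
    exact hcond z hz hfz (by rwa [Walk.edges_reverse, List.mem_reverse] at hmem)

end

private lemma chain : ∀ {a b : V'} (p : G.Walk a b),
    (p.edges.filter (crossb f) = [] → f a = f b) ∧
    (∀ e, p.edges.filter (crossb f) = [e] → Sym2.map f e = s(f a, f b) ∧ f a ≠ f b) ∧
    (∀ e₁ e₂, p.edges.filter (crossb f) = [e₁, e₂] →
      ∃ m, Sym2.map f e₁ = s(f a, m) ∧ Sym2.map f e₂ = s(m, f b) ∧ f a ≠ m ∧ m ≠ f b) := by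
  intro a b p
  induction p with
  | nil => refine ⟨fun _ => rfl, ?_, ?_⟩ <;> simp [Walk.edges_nil]
  | @cons a v b h q ih =>
    obtain ⟨ih0, ih1, ih2⟩ := ih
    by_cases hc : f a = f v
    · have he : (Walk.cons h q).edges.filter (crossb f) = q.edges.filter (crossb f) := by
        simp [Walk.edges_cons, List.filter_cons, crossb_eq_false hc]
      rw [he, hc]
      exact ⟨ih0, ih1, ih2⟩
    · have he : (Walk.cons h q).edges.filter (crossb f)
          = s(a, v) :: q.edges.filter (crossb f) := by
        simp [Walk.edges_cons, List.filter_cons, crossb_eq_true hc]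
      rw [he]
      refine ⟨by simp, ?_, ?_⟩
      · intro e hfil
        injection hfil with h1 h2
        subst h1
        have hvb := ih0 h2
        rw [Sym2.map_pair_eq, hvb]
        exact ⟨rfl, fun hh => hc (hh.trans hvb.symm)⟩
      · intro e₁ e₂ hfil
        injection hfil with h1 h2
        subst h1
        obtain ⟨hm, hne⟩ := ih1 e₂ h2
        exact ⟨f v, by rw [Sym2.map_pair_eq], hm, hc, hne⟩
end Stmt13Aux
section Stmt13Aux2
open SimpleGraph
variable {V V' : Type*} {H : SimpleGraph V} {G : SimpleGraph V'} {f : V' → V}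

private lemma firstEdge {x y v : V'} (p : G.Walk x v) (hp : p.support.Nodup)
    (hxy : x ≠ y) (he : s(x, y) ∈ p.edges) :
    ∃ (h : G.Adj x y) (r : G.Walk y v), p = Walk.cons h r := by
  cases p with
  | nil => simp [Walk.edges_nil] at he
  | @cons _ w _ h' r' =>
    rw [Walk.edges_cons, List.mem_cons] at he
    rcases he with heq | hmem
    · rcases Sym2.eq_iff.mp heq with ⟨-, rfl⟩ | ⟨rfl, rfl⟩
      · exact ⟨h', r', rfl⟩
      · exact absurd rfl hxy
    · exfalso
      have hx : x ∈ r'.support := Walk.fst_mem_support_of_mem_edges r' hmem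
      rw [Walk.support_cons, List.nodup_cons] at hp
      exact hp.1 hx

/-- core lemma: a cycle of length ≤ 5 cannot contain a cross edge at its base vertex. -/
private lemma part2core
    (hu : ∀ x : V', ∃! y : V', G.Adj x y ∧ f x ≠ f y)
    (hadjH : ∀ x y : V', G.Adj x y → f x ≠ f y → H.Adj (f x) (f y))
    (hH : ∀ u v : V, H.Adj u v → ∃! p : V' × V', f p.1 = u ∧ f p.2 = v ∧ G.Adj p.1 p.2)
    {x y : V'} (hxy : G.Adj x y) (hf : f x ≠ f y)
    (c : G.Walk x x) (hc : c.IsCycle) (hlen : c.length ≤ 5) (he : s(x, y) ∈ c.edges) :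
    False := by
  obtain ⟨w, hxw, q, rfl⟩ := Walk.not_nil_iff.mp hc.not_nil
  obtain ⟨hqpath, hxw_notin⟩ := (Walk.cons_isCycle_iff q hxw).mp hc
  have htrail : (Walk.cons hxw q).IsTrail := hc.isCircuit.isTrail
  -- Step 1: 2 * ncross ≤ length
  have hkey : 2 * ncross f (Walk.cons hxw q) ≤ (Walk.cons hxw q).length := by
    rw [Walk.edges_cons, List.mem_cons] at he
    rcases he with heq | hmem
    · -- first edge is the cross edge s(x,y), so w = y
      have hwy : w = y := by
        rcases Sym2.eq_iff.mp heq.symm with ⟨-, h2⟩ | ⟨h1, -⟩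
        · exact h2
        · exact absurd h1 hxy.ne
      subst hwy
      -- q : Walk y x, not nil
      obtain ⟨z, hyz, q₂, rfl⟩ := Walk.not_nil_iff.mp (Walk.not_nil_of_ne (p := q) hxy.ne')
      have hq₂trail : q₂.IsTrail := hqpath.isTrail.of_cons
      have hfirstfibre : f w = f z := by
        by_contra hcr
        have hzx : z = x := (hu w).unique ⟨hyz, hcr⟩ ⟨hxy.symm, hf.symm⟩
        subst hzx
        exact hxw_notin (by rw [Walk.edges_cons, Sym2.eq_swap]; exact List.mem_cons_self)
      have hcond : ∀ z' : V', G.Adj x z' → f x ≠ f z' → s(x, z') ∉ q₂.edges := by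
        intro z' hz' hfz' hmem
        have : z' = w := (hu x).unique ⟨hz', hfz'⟩ ⟨hxy, hf⟩
        subst this
        exact hxw_notin (by rw [Walk.edges_cons]; exact List.mem_cons_of_mem _ hmem)
      have hb := endBound hu q₂ hq₂trail hcond
      rw [ncross_cons_cross hxw _ hf, ncross_cons_fibre hyz _ hfirstfibre,
        Walk.length_cons, Walk.length_cons]
      omega
    · -- the cross edge lies inside q; first edge of the cycle is a fibre edge
      have hfirstfibre : f x = f w := by
        by_contra hcr
        have hwy : w = y := (hu x).unique ⟨hxw, hcr⟩ ⟨hxy, hf⟩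
        subst hwy
        exact hxw_notin hmem
      have hmem' : s(x, y) ∈ q.reverse.edges := by
        rwa [Walk.edges_reverse, List.mem_reverse]
      obtain ⟨hadj2, r, hqr⟩ := firstEdge q.reverse hqpath.reverse.support_nodup hxy.ne hmem'
      have hrtrail : r.IsTrail := by
        have := hqpath.reverse.isTrail
        rw [hqr] at this
        exact this.of_cons
      have hnotin_r : s(x, y) ∉ r.edges := by
        have h2 := hqpath.reverse.isTrail.edges_nodup
        rw [hqr, Walk.edges_cons, List.nodup_cons] at h2
        exact h2.1
      have hcond : ∀ z' : V', G.Adj y z' → f y ≠ f z' → s(y, z') ∉ r.edges := by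
        intro z' hz' hfz' hmemr
        have : z' = x := (hu y).unique ⟨hz', hfz'⟩ ⟨hxy.symm, hf.symm⟩
        subst this
        exact hnotin_r (by rwa [Sym2.eq_swap] at hmemr)
      have hb := (bound hu r hrtrail).2 hcond
      have hnq : ncross f q = ncross f r + 1 := by
        rw [← ncross_reverse q, hqr, ncross_cons_cross hadj2 _ hf]
      have hlq : q.length = r.length + 1 := by
        rw [← Walk.length_reverse q, hqr, Walk.length_cons]
      rw [ncross_cons_fibre hxw _ hfirstfibre, Walk.length_cons, hnq, hlq]
      omega
  -- Step 2: hence ncross ≤ 2, and ncross ≥ 1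
  have h1 : 1 ≤ ncross f (Walk.cons hxw q) := ncross_pos _ he hf
  have h2 : ncross f (Walk.cons hxw q) ≤ 2 := by omega
  -- Step 3: use the chain structure to get a contradiction
  obtain ⟨ch0, ch1, ch2⟩ := chain (f := f) (Walk.cons hxw q)
  rcases (by omega : ncross f (Walk.cons hxw q) = 1 ∨ ncross f (Walk.cons hxw q) = 2)
    with hn | hn
  · -- exactly one cross edge
    obtain ⟨e, heq⟩ := List.length_eq_one_iff.mp hn
    exact (ch1 e heq).2 rfl
  · -- exactly two cross edges
    obtain ⟨e₁, e₂, heq⟩ := List.length_eq_two.mp hn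
    obtain ⟨m, hm1, hm2, hne, -⟩ := ch2 e₁ e₂ heq
    have hmem₁ : e₁ ∈ (Walk.cons hxw q).edges.filter (crossb f) := by rw [heq]; simp
    have hmem₂ : e₂ ∈ (Walk.cons hxw q).edges.filter (crossb f) := by rw [heq]; simp
    have hne12 : e₁ ≠ e₂ := by
      have hnd := htrail.edges_nodup.filter (crossb f)
      rw [heq] at hnd
      simp only [List.nodup_cons, List.mem_singleton] at hnd
      exact hnd.1
    obtain ⟨a₁, b₁, rfl⟩ := sym2_exists e₁
    obtain ⟨a₂, b₂, rfl⟩ := sym2_exists e₂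
    have hadj₁ : G.Adj a₁ b₁ := Walk.adj_of_mem_edges _ (List.mem_of_mem_filter hmem₁)
    have hadj₂ : G.Adj a₂ b₂ := Walk.adj_of_mem_edges _ (List.mem_of_mem_filter hmem₂)
    rw [Sym2.map_pair_eq, Sym2.eq_iff] at hm1 hm2
    have hHadj : H.Adj (f x) m := by
      rcases hm1 with ⟨h1, h2⟩ | ⟨h1, h2⟩
      · rw [← h1, ← h2]; exact hadjH a₁ b₁ hadj₁ (by rw [h1, h2]; exact hne)
      · rw [← h2, ← h1]
        exact (hadjH a₁ b₁ hadj₁ (by rw [h1, h2]; exact fun hh => hne hh.symm)).symm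
    obtain ⟨u, -, huniq⟩ := hH (f x) m hHadj
    have key₁ : s(a₁, b₁) = s(u.1, u.2) := by
      rcases hm1 with ⟨h1, h2⟩ | ⟨h1, h2⟩
      · have := huniq (a₁, b₁) ⟨h1, h2, hadj₁⟩
        rw [← this]
      · have := huniq (b₁, a₁) ⟨h2, h1, hadj₁.symm⟩
        rw [← this, Sym2.eq_swap]
    have key₂ : s(a₂, b₂) = s(u.1, u.2) := by
      rcases hm2 with ⟨h1, h2⟩ | ⟨h1, h2⟩
      · have := huniq (b₂, a₂) ⟨h2, h1, hadj₂.symm⟩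
        rw [← this, Sym2.eq_swap]
      · have := huniq (a₂, b₂) ⟨h1, h2, hadj₂⟩
        rw [← this]
    exact hne12 (key₁.trans key₂.symm)

end Stmt13Aux2
section Stmt13Aux3
open SimpleGraph

private def bw3 : (cycleGraph 3).Walk 0 0 :=
  Walk.cons (show (cycleGraph 3).Adj 0 1 by decide)
    (Walk.cons (show (cycleGraph 3).Adj 1 2 by decide)
      (Walk.cons (show (cycleGraph 3).Adj 2 0 by decide) Walk.nil))

private def bw4 : (cycleGraph 4).Walk 0 0 :=
  Walk.cons (show (cycleGraph 4).Adj 0 1 by decide)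
    (Walk.cons (show (cycleGraph 4).Adj 1 2 by decide)
      (Walk.cons (show (cycleGraph 4).Adj 2 3 by decide)
        (Walk.cons (show (cycleGraph 4).Adj 3 0 by decide) Walk.nil)))

private def bw5 : (cycleGraph 5).Walk 0 0 :=
  Walk.cons (show (cycleGraph 5).Adj 0 1 by decide)
    (Walk.cons (show (cycleGraph 5).Adj 1 2 by decide)
      (Walk.cons (show (cycleGraph 5).Adj 2 3 by decide)
        (Walk.cons (show (cycleGraph 5).Adj 3 4 by decide)
          (Walk.cons (show (cycleGraph 5).Adj 4 0 by decide) Walk.nil))))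

private lemma bw3_cycle : bw3.IsCycle := by
  rw [bw3, Walk.cons_isCycle_iff]; exact ⟨by rw [Walk.isPath_def]; decide, by decide⟩

private lemma bw4_cycle : bw4.IsCycle := by
  rw [bw4, Walk.cons_isCycle_iff]; exact ⟨by rw [Walk.isPath_def]; decide, by decide⟩

private lemma bw5_cycle : bw5.IsCycle := by
  rw [bw5, Walk.cons_isCycle_iff]; exact ⟨by rw [Walk.isPath_def]; decide, by decide⟩

private lemma bw3_length : bw3.length = 3 := rfl
private lemma bw4_length : bw4.length = 4 := rfl
private lemma bw5_length : bw5.length = 5 := rfl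

private lemma bw3_edge : s((0 : Fin 3), 1) ∈ bw3.edges := by rw [bw3]; decide
private lemma bw4_edge : s((0 : Fin 4), 1) ∈ bw4.edges := by rw [bw4]; decide
private lemma bw5_edge : s((0 : Fin 5), 1) ∈ bw5.edges := by rw [bw5]; decide

open Fin.CommRing in
/-- rotations/reflections of the cycle graph. -/
private def rotIso (m : ℕ) (d a : Fin (m + 3)) (hd : d = 1 ∨ d = -1) :
    cycleGraph (m + 3) ≃g cycleGraph (m + 3) where
  toEquiv :=
    { toFun := fun x => d * x + a
      invFun := fun x => d * (x - a)
      left_inv := fun x => by rcases hd with rfl | rfl <;> ring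
      right_inv := fun x => by rcases hd with rfl | rfl <;> ring }
  map_rel_iff' := by
    intro x y
    show (cycleGraph (m + 3)).Adj (d * x + a) (d * y + a) ↔ _
    rw [cycleGraph_adj, cycleGraph_adj]
    have h1 : d * x + a - (d * y + a) = d * (x - y) := by ring
    have h2 : d * y + a - (d * x + a) = d * (y - x) := by ring
    rw [h1, h2]
    rcases hd with rfl | rfl
    · rw [one_mul, one_mul]
    · rw [neg_one_mul, neg_one_mul, neg_sub, neg_sub]
      exact or_comm

open Fin.CommRing in
private lemma throughEdge (m : ℕ) (w : (cycleGraph (m + 3)).Walk 0 0) (hw : w.IsCycle)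
    (hl : w.length = m + 3) (he : s((0 : Fin (m + 3)), 1) ∈ w.edges)
    {u v : Fin (m + 3)} (h : (cycleGraph (m + 3)).Adj u v) :
    ∃ c : (cycleGraph (m + 3)).Walk u u,
      c.IsCycle ∧ c.length = m + 3 ∧ s(u, v) ∈ c.edges := by
  have hd : v - u = 1 ∨ v - u = -1 := by
    rcases cycleGraph_adj.mp h with h1 | h2
    · right; rw [← h1]; ring
    · left; exact h2
  set φ := rotIso m (v - u) u hd with hφ
  have h0 : φ 0 = u := by show (v - u) * 0 + u = u; ring
  have h1 : φ 1 = v := by show (v - u) * 1 + u = v; ring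
  have hinj : Function.Injective φ.toHom := by
    intro a b hab
    exact φ.toEquiv.injective hab
  refine ⟨(w.map φ.toHom).copy h0 h0, ?_, ?_, ?_⟩
  · rw [Walk.isCycle_copy]
    exact (Walk.map_isCycle_iff_of_injective hinj).mpr hw
  · rw [Walk.length_copy, Walk.length_map, hl]
  · rw [Walk.edges_copy, Walk.edges_map]
    refine List.mem_map.mpr ⟨s(0, 1), he, ?_⟩
    rw [Sym2.map_pair_eq]
    show s(φ 0, φ 1) = _
    rw [h0, h1]

end Stmt13Aux3
section Stmt13Aux4
open SimpleGraph
variable {V V' : Type*} {H : SimpleGraph V} {G : SimpleGraph V'} {f : V' → V}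

private lemma part2full
    (hu : ∀ x : V', ∃! y : V', G.Adj x y ∧ f x ≠ f y)
    (hadjH : ∀ x y : V', G.Adj x y → f x ≠ f y → H.Adj (f x) (f y))
    (hH : ∀ u v : V, H.Adj u v → ∃! p : V' × V', f p.1 = u ∧ f p.2 = v ∧ G.Adj p.1 p.2) :
    ∀ x y : V', G.Adj x y → f x ≠ f y →
      ∀ (v : V') (c : G.Walk v v), c.IsCycle → c.length ≤ 5 → s(x, y) ∉ c.edges := by
  classical
  intro x y hxy hf v c hc hlen he
  have hx : x ∈ c.support := Walk.fst_mem_support_of_mem_edges c he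
  have hperm := (c.rotate_edges x hx).perm
  refine part2core hu hadjH hH hxy hf (c.rotate x hx) (hc.rotate hx) ?_ ?_
  · rw [← Walk.length_edges, hperm.length_eq, Walk.length_edges]; exact hlen
  · exact hperm.mem_iff.mpr he

end Stmt13Aux4
open VTpaper in
/-- For `3 ≤ k ≤ 5`, a `C_k`-expansion of a `k`-regular graph is not
edge-transitive: the cycle edges lie on a `k`-cycle, the matching edges on no cycle of
length ≤ 5. -/
theorem stmt_13 {V V' : Type*} [Nonempty V] (H : SimpleGraph V) (G : SimpleGraph V')
    (k : ℕ) (hk3 : 3 ≤ k) (hk5 : k ≤ 5) (hreg : Regular H k) (f : V' → V)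
    (hexp : IsCycleExpansionAlong H G k f) :
    (∀ x y : V', G.Adj x y → f x = f y →
      ∃ (v : V') (c : G.Walk v v), c.IsCycle ∧ c.length = k ∧ s(x, y) ∈ c.edges) ∧
    (∀ x y : V', G.Adj x y → f x ≠ f y →
      ∀ (v : V') (c : G.Walk v v), c.IsCycle → c.length ≤ 5 → s(x, y) ∉ c.edges) ∧
    ¬ EdgeTransitive G := by
  open SimpleGraph in
  obtain ⟨hsurj, hfib, hadjH, hu, hH⟩ := hexp
  obtain ⟨m, rfl⟩ : ∃ m, k = m + 3 := ⟨k - 3, by omega⟩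
  have hm2 : m ≤ 2 := by omega
  have part2 := part2full hu hadjH hH
  have part1 : ∀ x y : V', G.Adj x y → f x = f y →
      ∃ (v : V') (c : G.Walk v v), c.IsCycle ∧ c.length = m + 3 ∧ s(x, y) ∈ c.edges := by
    intro x y hxy hfxy
    obtain ⟨e⟩ := hfib (f x)
    have hxs : x ∈ f ⁻¹' {f x} := rfl
    have hys : y ∈ f ⁻¹' {f x} := hfxy.symm
    set x' : ↥(f ⁻¹' {f x}) := ⟨x, hxs⟩ with hx'
    set y' : ↥(f ⁻¹' {f x}) := ⟨y, hys⟩ with hy'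
    have hadj' : (G.induce (f ⁻¹' {f x})).Adj x' y' := hxy
    have h2 : (cycleGraph (m + 3)).Adj (e x') (e y') := e.map_rel_iff.mpr hadj'
    have hcyc : ∃ c : (cycleGraph (m + 3)).Walk (e x') (e x'),
        c.IsCycle ∧ c.length = m + 3 ∧ s(e x', e y') ∈ c.edges := by
      interval_cases m
      · exact throughEdge 0 bw3 bw3_cycle bw3_length bw3_edge h2
      · exact throughEdge 1 bw4 bw4_cycle bw4_length bw4_edge h2
      · exact throughEdge 2 bw5 bw5_cycle bw5_length bw5_edge h2
    obtain ⟨c, hcC, hcL, hcE⟩ := hcyc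
    have hinj1 : Function.Injective e.symm.toHom := fun a b hab => e.symm.toEquiv.injective hab
    have hx'' : e.symm.toHom (e x') = x' := e.symm_apply_apply x'
    set c₂ := (c.map e.symm.toHom).copy hx'' hx'' with hc₂def
    have hc₂C : c₂.IsCycle := by
      rw [hc₂def, Walk.isCycle_copy]
      exact (Walk.map_isCycle_iff_of_injective hinj1).mpr hcC
    let ι : G.induce (f ⁻¹' {f x}) →g G := ⟨Subtype.val, fun {a b} hab => hab⟩
    have hinj2 : Function.Injective ι := Subtype.val_injective
    refine ⟨x, c₂.map ι, (Walk.map_isCycle_iff_of_injective hinj2).mpr hc₂C, ?_, ?_⟩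
    · rw [Walk.length_map, hc₂def, Walk.length_copy, Walk.length_map, hcL]
    · rw [Walk.edges_map]
      refine List.mem_map.mpr ⟨s(x', y'), ?_, by rw [Sym2.map_pair_eq]; rfl⟩
      rw [hc₂def, Walk.edges_copy, Walk.edges_map]
      refine List.mem_map.mpr ⟨s(e x', e y'), hcE, ?_⟩
      rw [Sym2.map_pair_eq]
      show s(e.symm (e x'), e.symm (e y')) = _
      rw [e.symm_apply_apply, e.symm_apply_apply]
  refine ⟨part1, part2, ?_⟩
  intro hET
  obtain ⟨v0⟩ := ‹Nonempty V›
  obtain ⟨e⟩ := hfib v0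
  have hadj01 : (cycleGraph (m + 3)).Adj 0 1 := by
    rw [cycleGraph_adj]
    right
    simp
  have hadjInd : (G.induce (f ⁻¹' {v0})).Adj (e.symm 0) (e.symm 1) :=
    e.symm.map_rel_iff.mpr hadj01
  have hGadj : G.Adj (e.symm 0 : ↥(f ⁻¹' {v0})).val (e.symm 1 : ↥(f ⁻¹' {v0})).val := hadjInd
  have hfa : f (e.symm 0 : ↥(f ⁻¹' {v0})).val = v0 := (e.symm 0).2
  have hfb : f (e.symm 1 : ↥(f ⁻¹' {v0})).val = v0 := (e.symm 1).2
  obtain ⟨v, c, hC, hL, hE⟩ := part1 _ _ hGadj (hfa.trans hfb.symm)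
  obtain ⟨y₂, hy₂⟩ := (hu (e.symm 0 : ↥(f ⁻¹' {v0})).val).exists
  have he1 : s((e.symm 0 : ↥(f ⁻¹' {v0})).val, (e.symm 1 : ↥(f ⁻¹' {v0})).val) ∈ G.edgeSet :=
    hGadj
  have he2 : s((e.symm 0 : ↥(f ⁻¹' {v0})).val, y₂) ∈ G.edgeSet := hy₂.1
  obtain ⟨φ, hφ⟩ := hET _ _ he1 he2
  have hinj : Function.Injective φ.toHom := fun a b hab => φ.toEquiv.injective hab
  apply part2 _ _ hy₂.1 hy₂.2 (φ v) (c.map φ.toHom)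
    ((Walk.map_isCycle_iff_of_injective hinj).mpr hC)
    (by rw [Walk.length_map, hL]; omega)
  rw [← hφ]
  rw [Walk.edges_map]
  exact List.mem_map.mpr ⟨_, hE, rfl⟩
end

section
/- Let G be a vertex-transitive essentially 5-connected finite graph that is not quasi-5-connected. Then there is a partition P of V(G) into vertex-sets of K₄'s such that the edges of G with ends in different classes of P form a perfect matching of G; in particular, G is 4-regular and every vertex of G lies in exactly one K₄. -/
open SimpleGraph Set

section Aux
open VTpaper

variable {V : Type*}

/-- A "good" `K₄`: a 4-clique such that every vertex has exactly one neighbour outside,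
and these outside neighbours are distinct. -/
def AuxGood (G : SimpleGraph V) (S : Set V) : Prop :=
  S.ncard = 4 ∧ G.IsClique S ∧
  (∀ a ∈ S, ∃ b, b ∉ S ∧ G.Adj a b) ∧
  (∀ a ∈ S, ∀ b b', b ∉ S → b' ∉ S → G.Adj a b → G.Adj a b' → b = b') ∧
  (∀ a ∈ S, ∀ a' ∈ S, ∀ b, b ∉ S → G.Adj a b → G.Adj a' b → a = a')

lemma aux_sepEdges_comm (G : SimpleGraph V) (A B : Set V) :
    sepEdges G B A = sepEdges G A B := by
  ext e
  constructor
  · rintro ⟨a, b, ha, hb, hadj, rfl⟩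
    exact ⟨b, a, hb, ha, hadj.symm, Sym2.eq_swap⟩
  · rintro ⟨a, b, ha, hb, hadj, rfl⟩
    exact ⟨b, a, hb, ha, hadj.symm, Sym2.eq_swap⟩

lemma aux_tetra_symm {G : SimpleGraph V} {A B : Set V} (h : IsTetraSep G A B) :
    IsTetraSep G B A := by
  obtain ⟨⟨hun, hA, hB⟩, hord, ⟨hm1, hm2⟩, hd⟩ := h
  refine ⟨⟨by rw [Set.union_comm]; exact hun, hB, hA⟩, ?_, ⟨?_, ?_⟩, ?_⟩
  · rw [mixedOrder, aux_sepEdges_comm, Set.inter_comm]; exact hord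
  · rw [aux_sepEdges_comm]; exact hm1
  · rw [aux_sepEdges_comm, Set.inter_comm]; exact hm2
  · intro v hv
    rw [Set.inter_comm] at hv
    exact ⟨(hd v hv).2, (hd v hv).1⟩

lemma aux_good_of_tetra [Fintype V] {G : SimpleGraph V} {A B : Set V}
    (ht : IsTetraSep G A B) (hAB : A ∩ B = ∅) (hK : InducesK4 G A) : AuxGood G A := by
  obtain ⟨⟨hun, hA, hB⟩, hord, ⟨hmatch, -⟩, -⟩ := ht
  -- every vertex of A is outside B, and every vertex outside A is in B \ A
  have hAo : ∀ a ∈ A, a ∈ A \ B := by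
    intro a ha
    refine ⟨ha, fun hb => ?_⟩
    have : a ∈ A ∩ B := ⟨ha, hb⟩
    rw [hAB] at this; exact this
  have hBo : ∀ b : V, b ∉ A → b ∈ B \ A := by
    intro b hb
    have : b ∈ A ∪ B := by rw [hun]; trivial
    exact ⟨this.resolve_left hb, hb⟩
  have hsep : ∀ a b : V, a ∈ A → b ∉ A → G.Adj a b → s(a, b) ∈ sepEdges G A B :=
    fun a b ha hb hadj => ⟨a, b, hAo a ha, hBo b hb, hadj, rfl⟩
  have hcard : (sepEdges G A B).ncard = 4 := by
    have h0 : (A ∩ B).ncard = 0 := by rw [hAB]; exact Set.ncard_empty V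
    rw [mixedOrder, h0, zero_add] at hord
    exact hord
  -- unique outside neighbour
  have huniq_out : ∀ a ∈ A, ∀ b b', b ∉ A → b' ∉ A → G.Adj a b → G.Adj a b' → b = b' := by
    intro a ha b b' hb hb' hadj hadj'
    by_contra hne
    have he := hsep a b ha hb hadj
    have hf := hsep a b' ha hb' hadj'
    have hef : s(a, b) ≠ s(a, b') := by
      intro h
      rcases Sym2.eq_iff.mp h with ⟨-, h2⟩ | ⟨h1, -⟩
      · exact hne h2
      · exact hb' (h1 ▸ ha)
    exact hmatch he hf hef a ⟨Sym2.mem_mk_left a b, Sym2.mem_mk_left a b'⟩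
  have huniq_in : ∀ a ∈ A, ∀ a' ∈ A, ∀ b, b ∉ A → G.Adj a b → G.Adj a' b → a = a' := by
    intro a ha a' ha' b hb hadj hadj'
    by_contra hne
    have he := hsep a b ha hb hadj
    have hf := hsep a' b ha' hb hadj'
    have hef : s(a, b) ≠ s(a', b) := by
      intro h
      rcases Sym2.eq_iff.mp h with ⟨h1, -⟩ | ⟨h1, -⟩
      · exact hne h1
      · exact hb (h1 ▸ ha)
    exact hmatch he hf hef b ⟨Sym2.mem_mk_right a b, Sym2.mem_mk_right a' b⟩
  -- existence of outside neighbour: counting argument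
  have hex : ∀ a ∈ A, ∃ b, b ∉ A ∧ G.Adj a b := by
    classical
    set Pairs : Set (V × V) := {p | p.1 ∈ A ∧ p.2 ∉ A ∧ G.Adj p.1 p.2} with hPairs
    have himg : (fun p : V × V => s(p.1, p.2)) '' Pairs = sepEdges G A B := by
      ext e
      constructor
      · rintro ⟨⟨a, b⟩, ⟨ha, hb, hadj⟩, rfl⟩
        exact hsep a b ha hb hadj
      · rintro ⟨a, b, ha, hb, hadj, rfl⟩
        exact ⟨(a, b), ⟨ha.1, hb.2, hadj⟩, rfl⟩
    have hinj : Set.InjOn (fun p : V × V => s(p.1, p.2)) Pairs := by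
      rintro ⟨a, b⟩ ⟨ha, hb, -⟩ ⟨a', b'⟩ ⟨ha', hb', -⟩ h
      simp only at h
      rcases Sym2.eq_iff.mp h with ⟨h1, h2⟩ | ⟨h1, h2⟩
      · simp [h1, h2]
      · exact absurd (h1 ▸ ha) hb'
    have hPcard : Pairs.ncard = 4 := by
      rw [← hcard, ← himg, Set.ncard_image_of_injOn hinj]
    have hfinj : Set.InjOn (Prod.fst) Pairs := by
      rintro ⟨a, b⟩ ⟨ha, hb, hadj⟩ ⟨a', b'⟩ ⟨ha', hb', hadj'⟩ h
      simp only at h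
      subst h
      have : b = b' := huniq_out a ha b b' hb hb' hadj hadj'
      simp [this]
    have hsub : Prod.fst '' Pairs ⊆ A := by
      rintro x ⟨⟨a, b⟩, ⟨ha, -, -⟩, rfl⟩
      exact ha
    have heq : Prod.fst '' Pairs = A := by
      apply Set.eq_of_subset_of_ncard_le hsub _ A.toFinite
      rw [Set.ncard_image_of_injOn hfinj, hPcard, hK.1]
    intro a ha
    rw [← heq] at ha
    obtain ⟨⟨a', b⟩, ⟨-, hb, hadj⟩, rfl⟩ := ha
    exact ⟨b, hb, hadj⟩
  exact ⟨hK.1, hK.2, hex, huniq_out, huniq_in⟩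

lemma aux_good_transfer {G : SimpleGraph V} {S : Set V} (φ : G ≃g G)
    (h : AuxGood G S) : AuxGood G ((φ : V → V) '' S) := by
  obtain ⟨h4, hcl, hex, hout, hin⟩ := h
  have hmem : ∀ b : V, b ∈ (φ : V → V) '' S ↔ φ.symm b ∈ S := by
    intro b
    constructor
    · rintro ⟨a, ha, rfl⟩
      simpa using ha
    · intro hb
      exact ⟨φ.symm b, hb, by simp⟩
  have hadj_iff : ∀ a b : V, G.Adj (φ a) (φ b) ↔ G.Adj a b := fun a b => φ.map_adj_iff
  refine ⟨?_, ?_, ?_, ?_, ?_⟩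
  · rw [Set.ncard_image_of_injective S φ.injective]; exact h4
  · rintro x ⟨a, ha, rfl⟩ y ⟨b, hb, rfl⟩ hne
    have hab : a ≠ b := fun h => hne (by rw [h])
    exact (hadj_iff a b).mpr (hcl ha hb hab)
  · rintro x ⟨a, ha, rfl⟩
    obtain ⟨b, hb, hadj⟩ := hex a ha
    refine ⟨φ b, ?_, (hadj_iff a b).mpr hadj⟩
    rw [hmem]
    simpa using hb
  · rintro x ⟨a, ha, rfl⟩ b b' hb hb' hadj hadj'
    rw [hmem] at hb hb'
    have h1 : G.Adj a (φ.symm b) := by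
      have := φ.symm.map_adj_iff.mpr hadj
      simpa using this
    have h1' : G.Adj a (φ.symm b') := by
      have := φ.symm.map_adj_iff.mpr hadj'
      simpa using this
    have := hout a ha (φ.symm b) (φ.symm b') hb hb' h1 h1'
    have := congrArg φ this
    simpa using this
  · rintro x ⟨a, ha, rfl⟩ y ⟨a', ha', rfl⟩ b hb hadj hadj'
    rw [hmem] at hb
    have h1 : G.Adj a (φ.symm b) := by
      have := φ.symm.map_adj_iff.mpr hadj
      simpa using this
    have h1' : G.Adj a' (φ.symm b) := by
      have := φ.symm.map_adj_iff.mpr hadj'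
      simpa using this
    have := hin a ha a' ha' (φ.symm b) hb h1 h1'
    rw [this]

/-- The neighbourhood of a vertex of a good `K₄`. -/
lemma aux_nbhd [Fintype V] {G : SimpleGraph V} {S : Set V} {v : V}
    (h : AuxGood G S) (hv : v ∈ S) :
    ∃ w, w ∉ S ∧ G.Adj v w ∧ G.neighborSet v = insert w (S \ {v}) := by
  obtain ⟨h4, hcl, hex, hout, hin⟩ := h
  obtain ⟨w, hw, hadj⟩ := hex v hv
  refine ⟨w, hw, hadj, ?_⟩
  ext x
  simp only [SimpleGraph.mem_neighborSet, Set.mem_insert_iff, Set.mem_diff,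
    Set.mem_singleton_iff]
  constructor
  · intro hx
    by_cases hxS : x ∈ S
    · exact Or.inr ⟨hxS, fun hxv => G.loopless.irrefl v (hxv ▸ hx)⟩
    · exact Or.inl (hout v hv x w hxS hw hx hadj)
  · rintro (rfl | ⟨hxS, hxv⟩)
    · exact hadj
    · exact hcl hv hxS (Ne.symm hxv)

lemma aux_degree [Fintype V] {G : SimpleGraph V} {S : Set V} {v : V}
    (h : AuxGood G S) (hv : v ∈ S) : (G.neighborSet v).ncard = 4 := by
  obtain ⟨w, hw, hadj, hns⟩ := aux_nbhd h hv
  have hwd : w ∉ S \ {v} := fun hw' => hw hw'.1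
  rw [hns, Set.ncard_insert_of_notMem hwd (S \ {v}).toFinite,
    Set.ncard_diff_singleton_of_mem hv, h.1]

/-- A vertex of a good `K₄` lies in no other 4-clique. -/
lemma aux_unique_clique [Fintype V] {G : SimpleGraph V} {S T : Set V} {v : V}
    (h : AuxGood G S) (hv : v ∈ S) (hvT : v ∈ T) (hT4 : T.ncard = 4)
    (hTcl : G.IsClique T) : T = S := by
  obtain ⟨w, hw, hadj, hns⟩ := aux_nbhd h hv
  have hvw : v ≠ w := fun h' => hw (h' ▸ hv)
  have hTn : ∀ x ∈ T, x ≠ v → x ∈ insert w (S \ {v}) := by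
    intro x hx hxv
    rw [← hns]
    exact hTcl hvT hx (Ne.symm hxv)
  by_cases hwT : w ∈ T
  · -- find a third vertex of T
    exfalso
    have hnsub : ¬ T ⊆ {v, w} := by
      intro hsub
      have := Set.ncard_le_ncard hsub (Set.toFinite _)
      have h2 : ({v, w} : Set V).ncard ≤ 2 := by
        calc ({v, w} : Set V).ncard ≤ ({w} : Set V).ncard + 1 := Set.ncard_insert_le v {w}
        _ = 2 := by rw [Set.ncard_singleton]
      omega
    obtain ⟨x, hxT, hxvw⟩ := Set.not_subset.mp hnsub
    simp only [Set.mem_insert_iff, Set.mem_singleton_iff, not_or] at hxvw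
    obtain ⟨hxv, hxw⟩ := hxvw
    have hxS : x ∈ S := by
      have := hTn x hxT hxv
      rcases this with h' | h'
      · exact absurd h' hxw
      · exact h'.1
    have hxadj : G.Adj x w := hTcl hxT hwT hxw
    exact hxv (h.2.2.2.2 x hxS v hv w hw hxadj hadj)
  · have hsub : T \ {v} ⊆ S \ {v} := by
      rintro x ⟨hx, hxv⟩
      simp only [Set.mem_singleton_iff] at hxv
      rcases hTn x hx hxv with h' | h'
      · exact absurd (h' ▸ hx) hwT
      · exact h'
    have hTd : (T \ {v}).ncard = 3 := by
      rw [Set.ncard_diff_singleton_of_mem hvT, hT4]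
    have hSd : (S \ {v}).ncard = 3 := by
      rw [Set.ncard_diff_singleton_of_mem hv, h.1]
    have heq : T \ {v} = S \ {v} :=
      Set.eq_of_subset_of_ncard_le hsub (by rw [hTd, hSd]) (Set.toFinite _)
    have : insert v (T \ {v}) = insert v (S \ {v}) := by rw [heq]
    rwa [Set.insert_diff_singleton, Set.insert_diff_singleton,
      Set.insert_eq_self.mpr hvT, Set.insert_eq_self.mpr hv] at this

end Aux

open VTpaper in
/-- A vertex-transitive essentially 5-connected finite graph that is not
quasi-5-connected has a partition into `K₄`'s with cross edges a perfect matching; in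
particular it is 4-regular and every vertex lies in exactly one `K₄`. -/
theorem stmt_18 {V : Type*} [Fintype V] (G : SimpleGraph V)
    (hvt : VertexTransitive G) (he5 : EssentiallyFiveConnected G)
    (hnq5 : ¬ QuasiFiveConnected G) :
    (∃ P : Set (Set V), Setoid.IsPartition P ∧
      (∀ s ∈ P, s.ncard = 4 ∧ G.IsClique s) ∧
      (∀ v : V, ∃! w : V, G.Adj v w ∧ ∀ s ∈ P, ¬ (v ∈ s ∧ w ∈ s))) ∧
    Regular G 4 ∧
    (∀ v : V, ∃! s : Set V, v ∈ s ∧ s.ncard = 4 ∧ G.IsClique s) := by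
  -- Step 1: extract a tetra-separation
  rw [QuasiFiveConnected] at hnq5
  push_neg at hnq5
  obtain ⟨A, B, hT⟩ := hnq5 he5.1
  obtain ⟨hAB, hK⟩ := he5.2 A B hT
  -- Step 2: one side is a good K₄
  have hgood0 : ∃ S : Set V, AuxGood G S := by
    rcases hK with hK | hK
    · exact ⟨A, aux_good_of_tetra hT hAB hK⟩
    · refine ⟨B, aux_good_of_tetra (aux_tetra_symm hT) ?_ hK⟩
      rw [Set.inter_comm]; exact hAB
  -- Step 3: every vertex lies in a good K₄
  have hex : ∀ v : V, ∃ S : Set V, v ∈ S ∧ AuxGood G S := by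
    obtain ⟨S, hS⟩ := hgood0
    have hSne : S.Nonempty := by
      rw [← Set.ncard_pos S.toFinite, hS.1]; norm_num
    obtain ⟨a, ha⟩ := hSne
    intro v
    obtain ⟨φ, hφ⟩ := hvt a v
    exact ⟨(φ : V → V) '' S, ⟨a, ha, hφ⟩, aux_good_transfer φ hS⟩
  -- uniqueness of 4-cliques
  have huniq : ∀ v : V, ∀ S T : Set V, v ∈ S → AuxGood G S → v ∈ T → T.ncard = 4 →
      G.IsClique T → T = S := fun v S T hv hS hvT hT4 hTcl =>
    aux_unique_clique hS hv hvT hT4 hTcl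
  refine ⟨?_, ?_, ?_⟩
  · -- the partition
    refine ⟨{S | AuxGood G S}, ⟨?_, ?_⟩, ?_, ?_⟩
    · -- ∅ is not good
      intro h
      have := h.1
      rw [Set.ncard_empty] at this
      norm_num at this
    · -- each vertex in a unique class
      intro v
      obtain ⟨S, hvS, hS⟩ := hex v
      refine ⟨S, ⟨hS, hvS⟩, ?_⟩
      rintro T ⟨hTg, hvT⟩
      exact huniq v S T hvS hS hvT hTg.1 hTg.2.1
    · -- classes are 4-cliques
      intro s hs
      exact ⟨hs.1, hs.2.1⟩
    · -- cross edges form a perfect matching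
      intro v
      obtain ⟨S, hvS, hS⟩ := hex v
      obtain ⟨w, hw, hadj, -⟩ := aux_nbhd hS hvS
      refine ⟨w, ⟨hadj, ?_⟩, ?_⟩
      · rintro s hsg ⟨hvs, hws⟩
        have : s = S := huniq v S s hvS hS hvs hsg.1 hsg.2.1
        exact hw (this ▸ hws)
      · rintro w' ⟨hadj', hw'⟩
        have hw'S : w' ∉ S := fun h => hw' S hS ⟨hvS, h⟩
        exact hS.2.2.2.1 v hvS w' w hw'S hw hadj' hadj
  · -- 4-regular
    intro v
    obtain ⟨S, hvS, hS⟩ := hex v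
    exact aux_degree hS hvS
  · -- unique 4-clique through each vertex
    intro v
    obtain ⟨S, hvS, hS⟩ := hex v
    refine ⟨S, ⟨hvS, hS.1, hS.2.1⟩, ?_⟩
    rintro T ⟨hvT, hT4, hTcl⟩
    exact huniq v S T hvS hS hvT hT4 hTcl
end
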